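/- Let T' be a finite tree containing six distinct vertices x₁, x₂, x₃, v, x₅, w forming a path x₁–x₂–x₃–v–x₅–w, where in T' the degrees satisfy deg(x₁) = 1 and deg(x₂) = deg(x₃) = deg(v) = deg(x₅) = 2. Let T be the tree obtained from T' by adding three new vertices u₁, u₂, u₃ with edges u₁u₂, u₂u₃, and vu₁. Then γ₂(T) = γ₂(T') + 2 and α₂(T) = α₂(T') + 2; in particular α₂(T) − γ₂(T) = α₂(T') − γ₂(T'). -/

import Mathlib

/-!
Hanging the path `u₁u₂u₃` on `v` adds exactly two vertices to optimal sets.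

A 2-dominating set of `T` contains the leaf `u₃` and one of `u₁, u₂`, and `{u₁, u₃}` can be added
to any 2-dominating set of `T'`. Conversely the trace on `T'` of a 2-dominating set `S` of `T` is
2-dominating: if `v ∉ S`, then the degree-2 neighbours `x₃, x₅` of `v` lie in `S` (otherwise both of
their neighbours, `v` among them, would), so `v` keeps two dominators.

A 2-independent set of `T` contains at most two of the `uᵢ` (three would give `u₂` two neighbours in
it), and `{u₂, u₃}` can be added to any 2-independent set of `T'` since `u₁` stays out.
-/

open SimpleGraph

/-- `S` is a `k`-dominating set of the subgraph of `G` induced by `U`: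
`S ⊆ U` and every vertex of `U` not in `S` has at least `k` neighbors in `S`. -/
def IsKDomOn {V : Type*} (G : SimpleGraph V) (k : ℕ) (U S : Set V) : Prop :=
  S ⊆ U ∧ ∀ v ∈ U, v ∉ S → k ≤ (G.neighborSet v ∩ S).ncard

/-- `S` is a `k`-independent set of the subgraph of `G` induced by `U`:
`S ⊆ U` and every vertex of `S` has at most `k - 1` neighbors in `S`. -/
def IsKIndOn {V : Type*} (G : SimpleGraph V) (k : ℕ) (U S : Set V) : Prop :=
  S ⊆ U ∧ ∀ v ∈ S, (G.neighborSet v ∩ S).ncard ≤ k - 1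

/-- The `k`-domination number of the subgraph of `G` induced by `U`. -/
noncomputable def gammaK {V : Type*} (G : SimpleGraph V) (k : ℕ) (U : Set V) : ℕ :=
  sInf {n | ∃ S, IsKDomOn G k U S ∧ S.ncard = n}

/-- The `k`-independence number of the subgraph of `G` induced by `U`. -/
noncomputable def alphaK {V : Type*} (G : SimpleGraph V) (k : ℕ) (U : Set V) : ℕ :=
  sSup {n | ∃ S, IsKIndOn G k U S ∧ S.ncard = n}
open Set

namespace Set

variable {α β : Type*}

lemma ncard_image_inl_union_image_inr {s : Set α} {t : Set β} (hs : s.Finite) (ht : t.Finite) :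
    (Sum.inl '' s ∪ Sum.inr '' t : Set (α ⊕ β)).ncard = s.ncard + t.ncard := by
  rw [ncard_union_eq disjoint_image_inl_image_inr (hs.image _) (ht.image _),
    ncard_image_of_injective _ Sum.inl_injective, ncard_image_of_injective _ Sum.inr_injective]

lemma ncard_eq_ncard_preimage_inl_add_ncard_preimage_inr [Finite α] [Finite β] (s : Set (α ⊕ β)) :
    s.ncard = (Sum.inl ⁻¹' s).ncard + (Sum.inr ⁻¹' s).ncard := by
  conv_lhs => rw [← image_preimage_inl_union_image_preimage_inr s]
  exact ncard_image_inl_union_image_inr (toFinite _) (toFinite _)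

end Set

section Extremal

variable {V : Type*} {G : SimpleGraph V} {k : ℕ} {U S : Set V}

lemma gammaK_le_ncard (h : IsKDomOn G k U S) : gammaK G k U ≤ S.ncard :=
  Nat.sInf_le ⟨S, h, rfl⟩

lemma exists_isKDomOn_ncard_eq_gammaK (G : SimpleGraph V) (k : ℕ) (U : Set V) :
    ∃ S, IsKDomOn G k U S ∧ S.ncard = gammaK G k U :=
  Nat.sInf_mem (s := {n | ∃ S, IsKDomOn G k U S ∧ S.ncard = n})
    ⟨_, U, ⟨subset_rfl, fun _ hv hv' => (hv' hv).elim⟩, rfl⟩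

lemma bddAbove_ncard_isKIndOn [Finite V] (G : SimpleGraph V) (k : ℕ) (U : Set V) :
    BddAbove {n | ∃ S, IsKIndOn G k U S ∧ S.ncard = n} :=
  ⟨Nat.card V, fun _ ⟨S, _, hS⟩ => hS ▸ ncard_le_card S⟩

lemma ncard_le_alphaK [Finite V] (h : IsKIndOn G k U S) : S.ncard ≤ alphaK G k U :=
  le_csSup (bddAbove_ncard_isKIndOn G k U) ⟨S, h, rfl⟩

lemma exists_isKIndOn_ncard_eq_alphaK [Finite V] (G : SimpleGraph V) (k : ℕ) (U : Set V) :
    ∃ S, IsKIndOn G k U S ∧ S.ncard = alphaK G k U :=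
  Nat.sSup_mem (s := {n | ∃ S, IsKIndOn G k U S ∧ S.ncard = n})
    ⟨_, ∅, ⟨empty_subset U, fun _ hv => hv.elim⟩, rfl⟩ (bddAbove_ncard_isKIndOn G k U)

lemma IsKDomOn.mem_of_adj [Finite V] (hS : IsKDomOn G 2 univ S) {a b : V} (ha : a ∉ S)
    (hdeg : (G.neighborSet a).ncard ≤ 2) (hab : G.Adj a b) : b ∈ S := by
  have hle : (G.neighborSet a).ncard ≤ (G.neighborSet a ∩ S).ncard :=
    hdeg.trans (hS.2 a (mem_univ a) ha)
  exact (inter_eq_left.mp (eq_of_subset_of_ncard_le inter_subset_left hle (toFinite _)) hab)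

end Extremal

namespace SimpleGraph

variable {V : Type*}

/-- The path `u₁u₂u₃` is `pathGraph 3` on `Fin 3`, joined to `v` through `u₁ = inr 0`. -/
def attachPath3 (G : SimpleGraph V) (v : V) : SimpleGraph (V ⊕ Fin 3) :=
  (G ⊕g pathGraph 3) ⊔ edge (Sum.inl v) (Sum.inr 0)

variable {G : SimpleGraph V} {v x y : V} {i j : Fin 3}

@[simp] lemma attachPath3_adj_inl_inl : (G.attachPath3 v).Adj (.inl x) (.inl y) ↔ G.Adj x y := by
  simp [attachPath3, edge_adj]

@[simp] lemma attachPath3_adj_inl_inr : (G.attachPath3 v).Adj (.inl x) (.inr i) ↔ x = v ∧ i = 0 := by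
  simp [attachPath3, edge_adj, eq_comm]

@[simp] lemma attachPath3_adj_inr_inl : (G.attachPath3 v).Adj (.inr i) (.inl x) ↔ x = v ∧ i = 0 := by
  rw [adj_comm, attachPath3_adj_inl_inr]

@[simp] lemma attachPath3_adj_inr_inr :
    (G.attachPath3 v).Adj (.inr i) (.inr j) ↔ (pathGraph 3).Adj i j := by
  simp [attachPath3, edge_adj]

lemma neighborSet_attachPath3_inr_one :
    (G.attachPath3 v).neighborSet (.inr 1) = {.inr 0, .inr 2} := by
  ext (x | i)
  · simp
  · fin_cases i <;> simp [pathGraph_adj]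

lemma neighborSet_attachPath3_inr_two : (G.attachPath3 v).neighborSet (.inr 2) = {.inr 1} := by
  ext (x | i)
  · simp
  · fin_cases i <;> simp [pathGraph_adj]

lemma image_inl_neighborSet_subset :
    Sum.inl '' G.neighborSet x ⊆ (G.attachPath3 v).neighborSet (.inl x) := by
  rintro _ ⟨y, hy, rfl⟩
  simpa using hy

lemma neighborSet_attachPath3_inl_of_ne (hx : x ≠ v) :
    (G.attachPath3 v).neighborSet (.inl x) = Sum.inl '' G.neighborSet x := by
  ext (y | i) <;> simp [hx]

lemma ncard_neighborSet_inter_preimage_inl_le [Finite V] (S : Set (V ⊕ Fin 3)) (x : V) :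
    (G.neighborSet x ∩ Sum.inl ⁻¹' S).ncard ≤
      ((G.attachPath3 v).neighborSet (.inl x) ∩ S).ncard := by
  rw [← ncard_image_of_injective _ Sum.inl_injective, image_inter_preimage]
  exact ncard_le_ncard (inter_subset_inter_left _ image_inl_neighborSet_subset)

lemma ncard_neighborSet_attachPath3_inl_inter {S : Set (V ⊕ Fin 3)} (h : x ≠ v ∨ .inr 0 ∉ S) :
    ((G.attachPath3 v).neighborSet (.inl x) ∩ S).ncard =
      (G.neighborSet x ∩ Sum.inl ⁻¹' S).ncard := by
  rw [← ncard_image_of_injective (G.neighborSet x ∩ _) Sum.inl_injective, image_inter_preimage]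
  congr 1
  ext (y | i)
  · simp
  · simp only [mem_inter_iff, mem_neighborSet, attachPath3_adj_inl_inr, mem_image, reduceCtorEq,
      and_false, exists_false, false_and, iff_false]
    rintro ⟨⟨rfl, rfl⟩, h0⟩
    exact h.elim (· rfl) (· h0)

lemma IsKIndOn.ncard_preimage_inr_le_two {A : Set (V ⊕ Fin 3)}
    (hA : IsKIndOn (G.attachPath3 v) 2 univ A) : (Sum.inr ⁻¹' A).ncard ≤ 2 := by
  by_contra! h
  have hall : Sum.inr ⁻¹' A = univ :=
    eq_of_subset_of_ncard_le (subset_univ _) (by simpa [Nat.lt_iff_add_one_le] using h) (toFinite _)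
  have hmem : ∀ i, Sum.inr i ∈ A := eq_univ_iff_forall.mp hall
  have := hA.2 _ (hmem 1)
  rw [neighborSet_attachPath3_inr_one, inter_eq_left.mpr (pair_subset (hmem 0) (hmem 2)),
    ncard_pair (by simp)] at this
  omega

section Finite

variable [Finite V] {a b : V}

lemma isKDomOn_attachPath3 {S : Set V} (hS : IsKDomOn G 2 univ S) :
    IsKDomOn (G.attachPath3 v) 2 univ (Sum.inl '' S ∪ Sum.inr '' {0, 2}) := by
  refine ⟨subset_univ _, ?_⟩
  rintro (x | i) - hx
  · have hxS : x ∉ S := fun h => hx (Or.inl (mem_image_of_mem _ h))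
    calc 2 ≤ (G.neighborSet x ∩ S).ncard := hS.2 x (mem_univ x) hxS
      _ = (G.neighborSet x ∩ Sum.inl ⁻¹' (Sum.inl '' S ∪ Sum.inr '' {(0 : Fin 3), 2})).ncard := by
        simp [preimage_image_eq _ Sum.inl_injective]
      _ ≤ _ := ncard_neighborSet_inter_preimage_inl_le _ x
  · have hi : i ∉ ({0, 2} : Set (Fin 3)) := fun h => hx (Or.inr (mem_image_of_mem _ h))
    obtain rfl : i = 1 := by fin_cases i <;> simp at hi ⊢
    have hsub : {.inr 0, .inr 2} ⊆ Sum.inl '' S ∪ Sum.inr '' {(0 : Fin 3), 2} := by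
      simp [pair_subset_iff]
    rw [neighborSet_attachPath3_inr_one, inter_eq_left.mpr hsub, ncard_pair (by simp)]

lemma gammaK_attachPath3_le : gammaK (G.attachPath3 v) 2 univ ≤ gammaK G 2 univ + 2 := by
  obtain ⟨S, hS, hcard⟩ := exists_isKDomOn_ncard_eq_gammaK G 2 univ
  calc _ ≤ _ := gammaK_le_ncard (isKDomOn_attachPath3 hS)
    _ = S.ncard + ({0, 2} : Set (Fin 3)).ncard :=
      ncard_image_inl_union_image_inr (toFinite _) (toFinite _)
    _ = _ := by rw [hcard, ncard_pair (by decide)]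

lemma IsKDomOn.two_le_ncard_preimage_inr {S : Set (V ⊕ Fin 3)}
    (hS : IsKDomOn (G.attachPath3 v) 2 univ S) : 2 ≤ (Sum.inr ⁻¹' S).ncard := by
  have h2 : Sum.inr 2 ∈ S := by
    by_contra h
    have := hS.2 _ (mem_univ _) h
    rw [neighborSet_attachPath3_inr_two] at this
    have := this.trans (ncard_inter_le_ncard_left _ _)
    simp at this
  have hpair : ∃ i ≠ (2 : Fin 3), Sum.inr i ∈ S := by
    by_cases h1 : Sum.inr 1 ∈ S
    · exact ⟨1, by decide, h1⟩
    · refine ⟨0, by decide, hS.mem_of_adj h1 ?_ (by simp [pathGraph_adj])⟩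
      rw [neighborSet_attachPath3_inr_one, ncard_pair (by simp)]
  obtain ⟨i, hi, hiS⟩ := hpair
  rw [← ncard_pair hi]
  exact ncard_le_ncard (pair_subset hiS h2)

lemma IsKDomOn.inl_mem_of_adj {S : Set (V ⊕ Fin 3)} (hS : IsKDomOn (G.attachPath3 v) 2 univ S)
    (hv : .inl v ∉ S) (ha : G.Adj v a) (hda : (G.neighborSet a).ncard ≤ 2) : .inl a ∈ S := by
  by_contra h
  refine hv (hS.mem_of_adj h ?_ (by simpa using ha.symm))
  rwa [neighborSet_attachPath3_inl_of_ne ha.ne', ncard_image_of_injective _ Sum.inl_injective]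

lemma IsKDomOn.preimage_inl {S : Set (V ⊕ Fin 3)} (hS : IsKDomOn (G.attachPath3 v) 2 univ S)
    (hab : a ≠ b) (ha : G.Adj v a) (hb : G.Adj v b) (hda : (G.neighborSet a).ncard ≤ 2)
    (hdb : (G.neighborSet b).ncard ≤ 2) : IsKDomOn G 2 univ (Sum.inl ⁻¹' S) := by
  refine ⟨subset_univ _, fun x _ hx => ?_⟩
  obtain rfl | hxv := eq_or_ne x v
  · rw [← ncard_pair hab]
    exact ncard_le_ncard (pair_subset ⟨ha, hS.inl_mem_of_adj hx ha hda⟩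
      ⟨hb, hS.inl_mem_of_adj hx hb hdb⟩)
  · rw [← ncard_neighborSet_attachPath3_inl_inter (Or.inl hxv)]
    exact hS.2 _ (mem_univ _) hx

lemma gammaK_attachPath3 (hab : a ≠ b) (ha : G.Adj v a) (hb : G.Adj v b)
    (hda : (G.neighborSet a).ncard ≤ 2) (hdb : (G.neighborSet b).ncard ≤ 2) :
    gammaK (G.attachPath3 v) 2 univ = gammaK G 2 univ + 2 := by
  refine le_antisymm gammaK_attachPath3_le ?_
  obtain ⟨S, hS, hcard⟩ := exists_isKDomOn_ncard_eq_gammaK (G.attachPath3 v) 2 univ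
  have hV := gammaK_le_ncard (hS.preimage_inl hab ha hb hda hdb)
  have hU := hS.two_le_ncard_preimage_inr
  have := ncard_eq_ncard_preimage_inl_add_ncard_preimage_inr S
  omega

lemma isKIndOn_attachPath3 {A : Set V} (hA : IsKIndOn G 2 univ A) :
    IsKIndOn (G.attachPath3 v) 2 univ (Sum.inl '' A ∪ Sum.inr '' {1, 2}) := by
  refine ⟨subset_univ _, ?_⟩
  rintro (x | i) hx
  · rw [ncard_neighborSet_attachPath3_inl_inter (Or.inr (by simp))]
    simpa [preimage_image_eq _ Sum.inl_injective] using hA.2 x (by simpa using hx)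
  · have hi : i ∈ ({1, 2} : Set (Fin 3)) := by simpa using hx
    rcases hi with rfl | rfl
    · rw [neighborSet_attachPath3_inr_one]
      calc _ ≤ ({Sum.inr 2} : Set (V ⊕ Fin 3)).ncard := ncard_le_ncard (by simp)
        _ = 1 := ncard_singleton _
    · rw [neighborSet_attachPath3_inr_two]
      exact (ncard_inter_le_ncard_left _ _).trans (ncard_singleton _).le

lemma IsKIndOn.preimage_inl {A : Set (V ⊕ Fin 3)} (hA : IsKIndOn (G.attachPath3 v) 2 univ A) :
    IsKIndOn G 2 univ (Sum.inl ⁻¹' A) :=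
  ⟨subset_univ _, fun x hx => (ncard_neighborSet_inter_preimage_inl_le A x).trans (hA.2 _ hx)⟩

lemma alphaK_attachPath3 : alphaK (G.attachPath3 v) 2 univ = alphaK G 2 univ + 2 := by
  obtain ⟨A, hA, hcard⟩ := exists_isKIndOn_ncard_eq_alphaK (G.attachPath3 v) 2 univ
  obtain ⟨A', hA', hcard'⟩ := exists_isKIndOn_ncard_eq_alphaK G 2 univ
  refine le_antisymm ?_ ?_
  · have hV := ncard_le_alphaK hA.preimage_inl
    have hU := hA.ncard_preimage_inr_le_two
    have := ncard_eq_ncard_preimage_inl_add_ncard_preimage_inr A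
    omega
  · calc alphaK G 2 univ + 2 = A'.ncard + ({1, 2} : Set (Fin 3)).ncard := by
          rw [hcard', ncard_pair (by decide)]
      _ = _ := (ncard_image_inl_union_image_inr (toFinite _) (toFinite _)).symm
      _ ≤ _ := ncard_le_alphaK (isKIndOn_attachPath3 hA')

end Finite

end SimpleGraph

theorem stmt16_general {V : Type*} [Fintype V] (T' : SimpleGraph V)
    (x₁ x₂ x₃ v x₅ w : V) (hdist : ([x₁, x₂, x₃, v, x₅, w] : List V).Pairwise (· ≠ ·))
    (h3 : T'.Adj x₃ v) (h4 : T'.Adj v x₅)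
    (hd3 : (T'.neighborSet x₃).ncard = 2) (hd5 : (T'.neighborSet x₅).ncard = 2)
    (T : SimpleGraph (V ⊕ Fin 3))
    (hadj : ∀ a b, T.Adj a b ↔
      ((∃ x y, T'.Adj x y ∧ a = Sum.inl x ∧ b = Sum.inl y) ∨
       (a = (Sum.inr 0 : V ⊕ Fin 3) ∧ b = Sum.inr 1) ∨ (a = Sum.inr 1 ∧ b = (Sum.inr 0 : V ⊕ Fin 3)) ∨
       (a = (Sum.inr 1 : V ⊕ Fin 3) ∧ b = Sum.inr 2) ∨ (a = Sum.inr 2 ∧ b = (Sum.inr 1 : V ⊕ Fin 3)) ∨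
       (a = Sum.inl v ∧ b = (Sum.inr 0 : V ⊕ Fin 3)) ∨ (a = (Sum.inr 0 : V ⊕ Fin 3) ∧ b = Sum.inl v))) :
    gammaK T 2 Set.univ = gammaK T' 2 Set.univ + 2 ∧
    alphaK T 2 Set.univ = alphaK T' 2 Set.univ + 2 ∧
    (alphaK T 2 Set.univ : ℤ) - (gammaK T 2 Set.univ : ℤ) =
      (alphaK T' 2 Set.univ : ℤ) - (gammaK T' 2 Set.univ : ℤ) := by
  have hx₃x₅ : x₃ ≠ x₅ := by simp_all
  obtain rfl : T = T'.attachPath3 v := by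
    ext (x | i) (y | j)
    · simp [hadj]
    · simp [hadj, eq_comm]
    · simp [hadj, eq_comm, and_comm]
    · fin_cases i <;> fin_cases j <;> simp [hadj, pathGraph_adj]
  have hγ := gammaK_attachPath3 hx₃x₅ h3.symm h4 hd3.le hd5.le
  have hα : alphaK (T'.attachPath3 v) 2 univ = alphaK T' 2 univ + 2 := alphaK_attachPath3
  refine ⟨hγ, hα, ?_⟩
  rw [hγ, hα]
  push_cast
  ring

theorem stmt16 {V : Type*} [Fintype V] (T' : SimpleGraph V) (hT' : T'.IsTree)
    (x₁ x₂ x₃ v x₅ w : V) (hdist : ([x₁, x₂, x₃, v, x₅, w] : List V).Pairwise (· ≠ ·))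
    (h1 : T'.Adj x₁ x₂) (h2 : T'.Adj x₂ x₃) (h3 : T'.Adj x₃ v)
    (h4 : T'.Adj v x₅) (h5 : T'.Adj x₅ w)
    (hd1 : (T'.neighborSet x₁).ncard = 1) (hd2 : (T'.neighborSet x₂).ncard = 2)
    (hd3 : (T'.neighborSet x₃).ncard = 2) (hdv : (T'.neighborSet v).ncard = 2)
    (hd5 : (T'.neighborSet x₅).ncard = 2)
    (T : SimpleGraph (V ⊕ Fin 3))
    (hadj : ∀ a b, T.Adj a b ↔
      ((∃ x y, T'.Adj x y ∧ a = Sum.inl x ∧ b = Sum.inl y) ∨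
       (a = (Sum.inr 0 : V ⊕ Fin 3) ∧ b = Sum.inr 1) ∨ (a = Sum.inr 1 ∧ b = (Sum.inr 0 : V ⊕ Fin 3)) ∨
       (a = (Sum.inr 1 : V ⊕ Fin 3) ∧ b = Sum.inr 2) ∨ (a = Sum.inr 2 ∧ b = (Sum.inr 1 : V ⊕ Fin 3)) ∨
       (a = Sum.inl v ∧ b = (Sum.inr 0 : V ⊕ Fin 3)) ∨ (a = (Sum.inr 0 : V ⊕ Fin 3) ∧ b = Sum.inl v))) :
    gammaK T 2 Set.univ = gammaK T' 2 Set.univ + 2 ∧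
    alphaK T 2 Set.univ = alphaK T' 2 Set.univ + 2 ∧
    (alphaK T 2 Set.univ : ℤ) - (gammaK T 2 Set.univ : ℤ) =
      (alphaK T' 2 Set.univ : ℤ) - (gammaK T' 2 Set.univ : ℤ) :=
  stmt16_general T' x₁ x₂ x₃ v x₅ w hdist h3 h4 hd3 hd5 T hadj
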